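/- arXiv:1701.07207 — 2 statements merged into one kernel-verified Lean document; each statement's English description precedes it below -/
import Mathlib

section
/- Let S be a multiplicative subset of a ring R. If every nonzero S-Noetherian right R-module has an S-finite point annihilator, then R is right S-Noetherian. -/
open MulOpposite

universe u

/-- `N` is an `S`-finite submodule of the right `R`-module `M`
(where right `R`-modules are modeled as `R`ᵐᵒᵖ-modules, so that
`(op s) • n = n * s` when `M = R`). -/
def SFinite {R : Type*} [Ring R] {M : Type*} [AddCommGroup M] [Module Rᵐᵒᵖ M]
    (S : Set R) (N : Submodule Rᵐᵒᵖ M) : Prop :=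
  ∃ s ∈ S, ∃ F : Submodule Rᵐᵒᵖ M, F.FG ∧ F ≤ N ∧ ∀ n ∈ N, (op s) • n ∈ F

/-- The annihilator of an element `m` of a right `R`-module, as a right ideal of `R`. -/
def annRight {R : Type*} [Ring R] {M : Type*} [AddCommGroup M] [Module Rᵐᵒᵖ M]
    (m : M) : Submodule Rᵐᵒᵖ R where
  carrier := {r | (op r) • m = 0}
  add_mem' {x y} hx hy := by
    simp only [Set.mem_setOf_eq] at *
    rw [op_add, add_smul, hx, hy, add_zero]
  zero_mem' := by simp
  smul_mem' c x hx := by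
    simp only [Set.mem_setOf_eq] at *
    have h : op (c • x) = c * op x := by simp [MulOpposite.smul_eq_mul_unop]
    rw [h, mul_smul, hx, smul_zero]

lemma op_smul_self {R : Type u} [Ring R] (r x : R) : (op r) • x = x * r := rfl

lemma mem_annRight_mk {R : Type u} [Ring R] (I : Submodule Rᵐᵒᵖ R) (x r : R) :
    r ∈ annRight (Submodule.Quotient.mk x : R ⧸ I) ↔ x * r ∈ I := by
  change (op r) • (Submodule.Quotient.mk x : R ⧸ I) = 0 ↔ _
  rw [← Submodule.Quotient.mk_smul, Submodule.Quotient.mk_eq_zero, op_smul_self]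

/-- left multiplication as an `Rᵐᵒᵖ`-linear map -/
def lmul {R : Type u} [Ring R] (x : R) : R →ₗ[Rᵐᵒᵖ] R where
  toFun r := x * r
  map_add' a b := mul_add x a b
  map_smul' c a := by
    simp only [MulOpposite.smul_eq_mul_unop, RingHom.id_apply, mul_assoc]

theorem SFinite_point_annihilator_implies_S_noetherian {R : Type u} [Ring R] (S : Set R)
    (hS1 : (1 : R) ∈ S) (hSmul : ∀ a ∈ S, ∀ b ∈ S, a * b ∈ S)
    (h : ∀ (M : Type u) [AddCommGroup M] [Module Rᵐᵒᵖ M],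
      (∃ m : M, m ≠ 0) → (∀ N : Submodule Rᵐᵒᵖ M, SFinite S N) →
      ∃ m : M, m ≠ 0 ∧ SFinite S (annRight m)) :
    ∀ I : Submodule Rᵐᵒᵖ R, SFinite S I := by
  by_contra hcon
  push_neg at hcon
  obtain ⟨I0, hI0⟩ := hcon
  set T : Set (Submodule Rᵐᵒᵖ R) := {J | ¬ SFinite S J} with hT
  -- Zorn's lemma
  have hzorn : ∀ c ⊆ T, IsChain (· ≤ ·) c → ∀ y ∈ c, ∃ ub ∈ T, ∀ z ∈ c, z ≤ ub := by
    intro c hcT hchain y hy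
    refine ⟨sSup c, ?_, fun z hz => le_sSup hz⟩
    intro hsfin
    obtain ⟨s, hs, F, hFfg, hFle, hmul⟩ := hsfin
    have hcomp := (Submodule.fg_iff_compact F).mp hFfg
    rw [CompleteLattice.isCompactElement_iff_le_of_directed_sSup_le] at hcomp
    obtain ⟨J, hJc, hFJ⟩ := hcomp c ⟨y, hy⟩ hchain.directedOn hFle
    exact hcT hJc ⟨s, hs, F, hFfg, hFJ, fun n hn => hmul n (le_sSup hJc hn)⟩
  obtain ⟨I, -, hIT, hImax⟩ := zorn_le_nonempty₀ T hzorn I0 hI0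
  -- I is a maximal non-S-finite right ideal. First, I ≠ ⊤.
  have htop : SFinite S (⊤ : Submodule Rᵐᵒᵖ R) := by
    refine ⟨1, hS1, ⊤, ⟨{1}, ?_⟩, le_rfl, fun n _ => trivial⟩
    refine top_le_iff.mp fun y _ => ?_
    rw [Finset.coe_singleton]
    exact Submodule.mem_span_singleton.mpr ⟨op y, by simp [op_smul_self]⟩
  have hIne : I ≠ ⊤ := fun hI => hIT (hI ▸ htop)
  obtain ⟨x0, hx0⟩ : ∃ x0 : R, x0 ∉ I := by
    by_contra hc; push_neg at hc; exact hIne (Submodule.eq_top_iff'.mpr hc)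
  -- the quotient module is nonzero and S-Noetherian
  have hnz : ∃ m : R ⧸ I, m ≠ 0 :=
    ⟨Submodule.Quotient.mk x0, by
      rw [Ne, Submodule.Quotient.mk_eq_zero]; exact hx0⟩
  have hnoeth : ∀ N : Submodule Rᵐᵒᵖ (R ⧸ I), SFinite S N := by
    intro N
    set J := N.comap I.mkQ with hJ
    have hIJ : I ≤ J := fun i hi => by
      simp [hJ, Submodule.mem_comap, I.mkQ_apply, (Submodule.Quotient.mk_eq_zero I).mpr hi]
    have hNJ : J.map I.mkQ = N := Submodule.map_comap_eq_of_surjective I.mkQ_surjective N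
    by_cases hJT : J ∈ T
    · -- then J = I and N = 0
      have hJI : J = I := le_antisymm (hImax hJT hIJ) hIJ
      refine ⟨1, hS1, ⊥, Submodule.fg_bot, bot_le, fun n hn => ?_⟩
      obtain ⟨u, rfl⟩ := I.mkQ_surjective n
      have hu : u ∈ I := hJI ▸ hn
      simp [(Submodule.Quotient.mk_eq_zero I).mpr hu]
    · obtain ⟨s, hs, F, hFfg, hFle, hmul⟩ := not_not.mp hJT
      refine ⟨s, hs, F.map I.mkQ, hFfg.map _, hNJ ▸ Submodule.map_mono hFle, fun n hn => ?_⟩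
      rw [← hNJ] at hn
      obtain ⟨u, hu, rfl⟩ := hn
      exact ⟨(op s) • u, hmul u hu, (Submodule.Quotient.mk_smul I (op s) u).symm⟩
  obtain ⟨m, hm0, s, hs, F, hFfg, hFle, hFs⟩ := h (R ⧸ I) hnz hnoeth
  obtain ⟨x, rfl⟩ := I.mkQ_surjective m
  have hx : x ∉ I := fun hx => hm0 ((Submodule.Quotient.mk_eq_zero I).mpr hx)
  -- K = I + xR is S-finite
  set K := I ⊔ Submodule.span Rᵐᵒᵖ {x} with hK
  have hxK : x ∈ K := Submodule.mem_sup_right (Submodule.mem_span_singleton_self x)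
  have hKsf : SFinite S K := by
    by_contra hKT
    exact hx (hImax hKT le_sup_left hxK)
  obtain ⟨t, ht, G, ⟨Tf, hTf⟩, hGle, hGt⟩ := hKsf
  -- decompose the generators of G
  have hdec : ∀ g : R, ∃ i : R, ∃ a : Rᵐᵒᵖ, (g ∈ (Tf : Set R)) → i ∈ I ∧ i + a • x = g := by
    intro g
    by_cases hg : g ∈ (Tf : Set R)
    · have : g ∈ K := hGle (hTf ▸ Submodule.subset_span hg)
      rw [hK, Submodule.mem_sup] at this
      obtain ⟨i, hi, z, hz, hiz⟩ := this
      obtain ⟨a, rfl⟩ := Submodule.mem_span_singleton.mp hz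
      exact ⟨i, a, fun _ => ⟨hi, hiz⟩⟩
    · exact ⟨0, 0, fun hg' => absurd hg' hg⟩
  choose ig ag hg using hdec
  set D := Submodule.span Rᵐᵒᵖ (ig '' (Tf : Set R)) with hD
  have hDfg : D.FG := Submodule.fg_span ((Tf.finite_toSet).image ig)
  have hDI : D ≤ I := Submodule.span_le.mpr (by
    rintro _ ⟨g, hgT, rfl⟩; exact (hg g hgT).1)
  have hGD : G ≤ D ⊔ Submodule.span Rᵐᵒᵖ {x} := by
    rw [← hTf, Submodule.span_le]
    intro g hgT
    obtain ⟨hiI, hsum⟩ := hg g hgT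
    rw [← hsum]
    exact Submodule.add_mem _
      (Submodule.mem_sup_left (Submodule.subset_span ⟨g, hgT, rfl⟩))
      (Submodule.mem_sup_right (Submodule.smul_mem _ _ (Submodule.mem_span_singleton_self x)))
  -- the finitely generated approximation of I
  set J := D ⊔ F.map (lmul x) with hJd
  have hJfg : J.FG := hDfg.sup (hFfg.map _)
  have hJI : J ≤ I := sup_le hDI (Submodule.map_le_iff_le_comap.mpr (by
    intro b hb
    have := (mem_annRight_mk I x b).mp (hFle hb)
    simpa [lmul, Submodule.mem_comap] using this))
  refine hIT ⟨t * s, hSmul t ht s hs, J, hJfg, hJI, fun u hu => ?_⟩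
  have h1 : (op t) • u ∈ G := hGt u (Submodule.mem_sup_left hu)
  have h2 := hGD h1
  rw [Submodule.mem_sup] at h2
  obtain ⟨d, hd, z, hz, hsum⟩ := h2
  obtain ⟨c, rfl⟩ := Submodule.mem_span_singleton.mp hz
  -- c • x ∈ I, so unop c ∈ annRight m
  have hcxI : c • x ∈ I := by
    have : (op t) • u - d ∈ I := I.sub_mem (I.smul_mem _ hu) (hDI hd)
    rwa [← hsum, add_sub_cancel_left] at this
  have hcann : unop c ∈ annRight (Submodule.Quotient.mk x : R ⧸ I) := by
    rw [mem_annRight_mk]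
    have : c • x = x * unop c := by rw [← op_smul_self, op_unop]
    rwa [this] at hcxI
  have hcs : (op s) • (unop c) ∈ F := hFs _ hcann
  -- now compute
  have key : (op (t * s)) • u = (op s) • d + lmul x ((op s) • unop c) := by
    have : (op (t * s)) • u = (op s) • ((op t) • u) := by
      rw [op_mul, mul_smul]
    rw [this, ← hsum, smul_add]
    congr 1
    simp [lmul, MulOpposite.smul_eq_mul_unop, mul_assoc]
  rw [key]
  exact Submodule.add_mem _ (Submodule.mem_sup_left (D.smul_mem _ hd))
    (Submodule.mem_sup_right ⟨(op s) • unop c, hcs, rfl⟩)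
end

section
/- Let R be a commutative ring, S a multiplicative subset, and M a nonzero S-Noetherian R-module such that every element of S is a non-zero-divisor on M. Then M has an associated prime, i.e., there exists a nonzero m ∈ M such that Ann_R(m) is a prime ideal. -/
/-!
A maximal member of `{Ann(m) | m ≠ 0}` is prime, so it suffices to apply Zorn's lemma, i.e. to show
that a chain of annihilators `Ann(mᵢ)` attains its supremum `I`. Choose `s₀ ∈ S` and generators
`x₁, …, xₙ` of a submodule containing `s₀M`; as `s₀` is regular, `r ↦ (r xᵢ)ᵢ` embeds `R ⧸ Ann(M)`
into the `S`-Noetherian module `Mⁿ`. Hence `sI ⊆ J + Ann(M)` for some `s ∈ S` and finitely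
generated `J ≤ I`. Then `J ≤ Ann(mₖ)` for one `k`, so `sI` kills `mₖ`, and so does `I` since `s`
is regular on `M`.
-/

open Submodule

namespace Submodule

variable {R M P : Type*}

section Semiring

variable [Semiring R] [AddCommMonoid M] [Module R M] [AddCommMonoid P] [Module R P]

theorem exists_fg_le_map_eq {f : M →ₗ[R] P} {N : Submodule R M} {F : Submodule R P}
    (hF : F.FG) (hFN : F ≤ N.map f) : ∃ G : Submodule R M, G.FG ∧ G ≤ N ∧ G.map f = F := by
  obtain ⟨n, x, rfl⟩ := fg_iff_exists_fin_generating_family.mp hF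
  choose y hyN hyx using fun i => hFN (subset_span (Set.mem_range_self i))
  refine ⟨span R (Set.range y), fg_span (Set.finite_range y), span_le.mpr ?_, ?_⟩
  · rintro _ ⟨i, rfl⟩
    exact hyN i
  · rw [map_span, ← Set.range_comp]
    exact congrArg _ (congrArg Set.range (funext hyx))

variable (S : Submonoid R)

def IsSFinite (N : Submodule R M) : Prop :=
  ∃ s ∈ S, ∃ F : Submodule R M, F.FG ∧ F ≤ N ∧ ∀ n ∈ N, s • n ∈ F

variable {S}

theorem IsSFinite.map {N : Submodule R M} (h : N.IsSFinite S) (f : M →ₗ[R] P) :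
    (N.map f).IsSFinite S := by
  obtain ⟨s, hs, F, hF, hFN, hsF⟩ := h
  refine ⟨s, hs, F.map f, hF.map f, map_mono hFN, ?_⟩
  rintro _ ⟨n, hn, rfl⟩
  rw [← map_smul]
  exact mem_map_of_mem (hsF n hn)

theorem IsSFinite.of_map_injective {N : Submodule R M} {f : M →ₗ[R] P}
    (hf : Function.Injective f) (h : (N.map f).IsSFinite S) : N.IsSFinite S := by
  obtain ⟨s, hs, F, hF, hFN, hsF⟩ := h
  obtain ⟨G, hG, hGN, rfl⟩ := exists_fg_le_map_eq hF hFN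
  refine ⟨s, hs, G, hG, hGN, fun n hn => ?_⟩
  obtain ⟨g, hg, hgn⟩ := hsF _ (mem_map_of_mem hn)
  rw [← map_smul] at hgn
  rwa [← hf hgn]

end Semiring

theorem IsSFinite.of_map_of_inf_ker [Ring R] [AddCommGroup M] [Module R M] [AddCommGroup P]
    [Module R P] {S : Submonoid R} {N : Submodule R M} (g : M →ₗ[R] P)
    (hmap : (N.map g).IsSFinite S) (hker : (N ⊓ LinearMap.ker g).IsSFinite S) :
    N.IsSFinite S := by
  obtain ⟨s₁, hs₁, F₁, hF₁, hF₁N, hs₁F₁⟩ := hmap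
  obtain ⟨s₂, hs₂, F₂, hF₂, hF₂N, hs₂F₂⟩ := hker
  obtain ⟨G, hG, hGN, rfl⟩ := exists_fg_le_map_eq hF₁ hF₁N
  refine ⟨s₂ * s₁, mul_mem hs₂ hs₁, G ⊔ F₂, hG.sup hF₂, sup_le hGN (hF₂N.trans inf_le_left),
    fun n hn => ?_⟩
  obtain ⟨p, hp, hpn⟩ := hs₁F₁ _ (mem_map_of_mem hn)
  have hdiff : s₁ • n - p ∈ N ⊓ LinearMap.ker g :=
    ⟨sub_mem (smul_mem _ _ hn) (hGN hp), by simp [hpn]⟩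
  have hsplit : (s₂ * s₁) • n = s₂ • p + s₂ • (s₁ • n - p) := by
    rw [smul_sub, add_sub_cancel, mul_smul]
  rw [hsplit]
  exact add_mem (mem_sup_left (smul_mem _ _ hp)) (mem_sup_right (hs₂F₂ _ hdiff))

end Submodule

def IsSNoetherian {R : Type*} [Semiring R] (S : Submonoid R) (M : Type*) [AddCommMonoid M]
    [Module R M] : Prop :=
  ∀ N : Submodule R M, N.IsSFinite S

namespace IsSNoetherian

variable {R M M' : Type*}

theorem of_injective [Semiring R] [AddCommMonoid M] [Module R M] [AddCommMonoid M']
    [Module R M'] {S : Submonoid R} (h : IsSNoetherian S M) (f : M' →ₗ[R] M)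
    (hf : Function.Injective f) : IsSNoetherian S M' :=
  fun _ => IsSFinite.of_map_injective hf (h _)

section Ring

variable [Ring R] [AddCommGroup M] [Module R M] {S : Submonoid R}

theorem prod [AddCommGroup M'] [Module R M'] (h : IsSNoetherian S M) (h' : IsSNoetherian S M') :
    IsSNoetherian S (M × M') := by
  intro N
  refine IsSFinite.of_map_of_inf_ker (LinearMap.fst R M M') (h _) ?_
  rw [LinearMap.ker_fst, inf_comm, ← map_comap_eq]
  exact (h' _).map _

theorem pi_fin (h : IsSNoetherian S M) : ∀ n : ℕ, IsSNoetherian S (Fin n → M)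
  | 0 => fun _ => ⟨1, one_mem S, ⊥, fg_bot, bot_le, fun n _ => by simp [Subsingleton.elim n 0]⟩
  | n + 1 =>
    let e := Fin.consLinearEquiv R fun _ : Fin (n + 1) => M
    (h.prod (pi_fin h n)).of_injective e.symm.toLinearMap e.symm.injective

end Ring

section CommRing

variable [CommRing R] [AddCommGroup M] [Module R M] {S : Submonoid R}

theorem quotient_annihilator (h : IsSNoetherian S M) (hS : S ≤ nonZeroSMulDivisors R M) :
    IsSNoetherian S (R ⧸ Module.annihilator R M) := by
  obtain ⟨s, hs, F, hF, -, hsF⟩ := h ⊤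
  obtain ⟨n, x, rfl⟩ := fg_iff_exists_fin_generating_family.mp hF
  let φ : R →ₗ[R] Fin n → M := LinearMap.pi fun i => LinearMap.toSpanSingleton R M (x i)
  have hker : Module.annihilator R M = LinearMap.ker φ := by
    ext r
    simp only [Module.mem_annihilator, LinearMap.mem_ker, φ, funext_iff, LinearMap.pi_apply,
      LinearMap.toSpanSingleton_apply, Pi.zero_apply]
    refine ⟨fun hr i => hr (x i), fun hr m => hS hs _ ?_⟩
    have hspan : r ∈ (span R (Set.range x)).annihilator :=
      (mem_annihilator_span _ r).mpr fun ⟨_, i, hi⟩ => hi ▸ hr i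
    rw [smul_comm]
    exact mem_annihilator.mp hspan _ (hsF m trivial)
  exact (h.pi_fin n).of_injective (Submodule.liftQ _ φ hker.le)
    (LinearMap.ker_eq_bot.mp (ker_liftQ_eq_bot' _ φ hker))

theorem sSup_mem_of_isChain (h : IsSNoetherian S (R ⧸ Module.annihilator R M))
    (hS : S ≤ nonZeroSMulDivisors R M) {c : Set (Ideal R)}
    (hc : c ⊆ Set.range (Ideal.torsionOf R M)) (hchain : IsChain (· ≤ ·) c)
    (hne : c.Nonempty) : sSup c ∈ c := by
  obtain ⟨s, hs, F, hF, hFc, hsF⟩ := h (Submodule.map (Module.annihilator R M).mkQ (sSup c))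
  obtain ⟨J, hJ, hJc, rfl⟩ := exists_fg_le_map_eq hF hFc
  obtain ⟨_, hk, hJk⟩ := (CompleteLattice.isCompactElement_iff_le_of_directed_sSup_le _ J).mp
    ((fg_iff_compact J).mp hJ) c hne hchain.directedOn hJc
  obtain ⟨m, rfl⟩ := hc hk
  suffices sSup c ≤ Ideal.torsionOf R M m by rwa [le_antisymm this (le_sSup hk)]
  intro r hr
  obtain ⟨j, hj, hjr⟩ := hsF _ (mem_map_of_mem hr)
  have hdiff : j - s * r ∈ Module.annihilator R M := by
    rw [← Submodule.Quotient.eq, ← mkQ_apply, ← mkQ_apply, hjr, ← map_smul, smul_eq_mul]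
  have hsr : (s * r) • m = 0 := by
    rw [← sub_sub_cancel j (s * r), sub_smul, (Ideal.mem_torsionOf_iff m j).mp (hJk hj),
      Module.mem_annihilator.mp hdiff m, sub_zero]
  rw [mul_smul] at hsr
  exact hS hs _ hsr

end CommRing

end IsSNoetherian

theorem Ideal.isPrime_torsionOf_of_maximal {R M : Type*} [CommSemiring R] [AddCommMonoid M]
    [Module R M] {m : M} (hm : m ≠ 0)
    (hmax : Maximal (fun I => ∃ m' : M, m' ≠ 0 ∧ Ideal.torsionOf R M m' = I)
      (Ideal.torsionOf R M m)) :
    (Ideal.torsionOf R M m).IsPrime := by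
  refine ⟨fun htop => hm ((Ideal.torsionOf_eq_top_iff R m).mp htop), fun {a b} hab => ?_⟩
  refine or_iff_not_imp_right.mpr fun hb => ?_
  have hle : Ideal.torsionOf R M m ≤ Ideal.torsionOf R M (b • m) := fun r hr => by
    rw [Ideal.mem_torsionOf_iff] at hr ⊢
    rw [smul_comm, hr, smul_zero]
  rw [← (hmax.le_of_ge ⟨b • m, hb, rfl⟩ hle).antisymm hle, Ideal.mem_torsionOf_iff, smul_smul]
  exact hab

theorem comm_S_noetherian_associated_prime {R : Type*} [CommRing R] (S : Set R)
    (hS1 : (1 : R) ∈ S) (hSmul : ∀ a ∈ S, ∀ b ∈ S, a * b ∈ S)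
    {M : Type*} [AddCommGroup M] [Module R M]
    (hM : ∃ x : M, x ≠ 0)
    (hSN : ∀ N : Submodule R M, ∃ s ∈ S, ∃ F : Submodule R M,
      F.FG ∧ F ≤ N ∧ ∀ n ∈ N, s • n ∈ F)
    (hreg : ∀ s ∈ S, ∀ m : M, s • m = 0 → m = 0) :
    ∃ m : M, m ≠ 0 ∧ Ideal.IsPrime (LinearMap.ker (LinearMap.toSpanSingleton R M m)) := by
  let T : Submonoid R := { carrier := S, mul_mem' := fun ha hb => hSmul _ ha _ hb, one_mem' := hS1 }
  have hT : T ≤ nonZeroSMulDivisors R M := fun s hs => hreg s hs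
  have hquot : IsSNoetherian T (R ⧸ Module.annihilator R M) :=
    IsSNoetherian.quotient_annihilator (fun N => hSN N) hT
  let 𝒜 : Set (Ideal R) := {I | ∃ m : M, m ≠ 0 ∧ Ideal.torsionOf R M m = I}
  have hchain : ∀ c ⊆ 𝒜, IsChain (· ≤ ·) c → ∀ y ∈ c, ∃ ub ∈ 𝒜, ∀ z ∈ c, z ≤ ub :=
    fun c hc hc' y hy =>
      have hc𝒜 : c ⊆ Set.range (Ideal.torsionOf R M) := fun _ hI => (hc hI).imp fun _ => And.right
      ⟨sSup c, hc (hquot.sSup_mem_of_isChain hT hc𝒜 hc' ⟨y, hy⟩), fun _ => le_sSup⟩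
  obtain ⟨x, hx⟩ := hM
  obtain ⟨_, -, hmax⟩ := zorn_le_nonempty₀ 𝒜 hchain _ ⟨x, hx, rfl⟩
  obtain ⟨m, hm, rfl⟩ := hmax.prop
  exact ⟨m, hm, Ideal.isPrime_torsionOf_of_maximal hm hmax⟩
end
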